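/- Let k ≥ 4 and let H ∈ M(k², k²) be the block matrix with k×k blocks H^{pp} = (1/2)I for all p and H^{pq} = (1/4)(I + (2/π)(E_{pq} + E_{qp})) for p ≠ q, where E_{pq} is the matrix unit. Let X ∈ M(k,k) be a skew-symmetric matrix with all row sums zero, vectorized by rows into ℝ^{k²}. Then X is an eigenvector of H with eigenvalue 1/4 − 1/(2π). -/
import Mathlib


open Matrix

open Real

/-- The `k² × k²` Hessian of the ReLU student-teacher loss at the global minimum
`W = I_k`, indexed by pairs `(p,i)`: blocks `H^{pp} = (1/2)I` and, for `p ≠ q`,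
`H^{pq} = (1/4)(I + (2/π)(E_{pq} + E_{qp}))`. -/
noncomputable def Hmat (k : ℕ) : Matrix (Fin k × Fin k) (Fin k × Fin k) ℝ :=
  fun pi qj =>
    if pi.1 = qj.1 then (if pi.2 = qj.2 then 1 / 2 else 0)
    else (1 / 4) * (if pi.2 = qj.2 then 1 else 0)
      + (1 / (2 * π)) * ((if pi.2 = pi.1 ∧ qj.2 = qj.1 then 1 else 0)
          + (if pi.2 = qj.1 ∧ qj.2 = pi.1 then 1 else 0))

/-- Every skew-symmetric matrix with all row sums zero, vectorized, is an
eigenvector of the Hessian at the global minimum with eigenvalue `1/4 - 1/(2π)`. -/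
theorem stmt11 (k : ℕ) (hk : 4 ≤ k) (X : Matrix (Fin k) (Fin k) ℝ)
    (hskew : Xᵀ = -X) (hrow : ∀ p, ∑ j, X p j = 0) :
    (Hmat k).mulVec (fun pi => X pi.1 pi.2) =
      fun pi => (1 / 4 - 1 / (2 * π)) * X pi.1 pi.2 := by
  have hsk : ∀ a b, X b a = - X a b := by
    intro a b
    have := congrFun (congrFun hskew a) b
    simpa [Matrix.transpose_apply] using this
  have hdiag : ∀ q, X q q = 0 := by
    intro q; have := hsk q q; linarith
  have hcol : ∀ j, ∑ q, X q j = 0 := by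
    intro j
    have : ∑ q, X q j = ∑ q, -(X j q) := by
      refine Finset.sum_congr rfl fun q _ => hsk j q
    rw [this]; simp [hrow j]
  funext pi
  obtain ⟨p, i⟩ := pi
  show ∑ qj : Fin k × Fin k, Hmat k (p, i) qj * X qj.1 qj.2 = _
  rw [Fintype.sum_prod_type]
  have expand : ∀ q : Fin k, ∑ j, Hmat k (p, i) (q, j) * X q j =
      (if p = q then (1/2) * X p i
       else (1/4) * X q i + (1/(2*π)) * ((if i = p then X q q else 0)
          + (if i = q then X q p else 0))) := by
    intro q
    by_cases h : p = q
    · subst h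
      simp only [Hmat, if_pos rfl, ite_mul, zero_mul, if_pos]
      rw [Finset.sum_ite_eq (Finset.univ) i (fun j => (1/2 : ℝ) * X p j)]
      simp
    · simp only [Hmat, if_neg h, add_mul, mul_assoc, ite_mul, one_mul, zero_mul,
        mul_ite, mul_zero, mul_one]
      rw [Finset.sum_add_distrib]
      congr 1
      · rw [Finset.sum_ite_eq Finset.univ i (fun j => (1/4 : ℝ) * X q j)]
        simp
      · rw [← Finset.mul_sum, Finset.sum_add_distrib]
        congr 1
        by_cases hip : i = p <;> by_cases hiq : i = q <;>
          simp [hip, hiq, h, Ne.symm h, Finset.sum_ite_eq, ite_and] <;>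
          first
          | (rw [Finset.sum_eq_single q] <;> simp_all)
          | (rw [Finset.sum_eq_single p] <;> simp_all)
  calc ∑ q, ∑ j, Hmat k (p, i) (q, j) * X q j
      = ∑ q, (if p = q then (1/2) * X p i
       else (1/4) * X q i + (1/(2*π)) * ((if i = p then X q q else 0)
          + (if i = q then X q p else 0))) := Finset.sum_congr rfl fun q _ => expand q
    _ = (1 / 4 - 1 / (2 * π)) * X p i := by
        rw [Finset.sum_eq_sum_sdiff_singleton_add (Finset.mem_univ p), if_pos rfl]
        set S := Finset.univ \ {p} with hS
        have hmem : ∀ q ∈ S, ¬ p = q := by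
          intro q hq
          simp only [hS, Finset.mem_sdiff, Finset.mem_singleton] at hq
          exact fun h => hq.2 h.symm
        rw [Finset.sum_congr rfl (fun q hq => if_neg (hmem q hq))]
        have h1 : ∑ q ∈ S, X q i = - X p i := by
          have := hcol i
          rw [Finset.sum_eq_sum_sdiff_singleton_add (Finset.mem_univ p)] at this
          linarith
        have h2 : ∑ q ∈ S, (if i = p then X q q else 0) = 0 := by
          split_ifs <;> simp [hdiag]
        have h3 : ∑ q ∈ S, (if i = q then X q p else 0) = - X p i := by
          by_cases hip : i = p
          · subst hip
            rw [Finset.sum_eq_zero, hdiag, neg_zero]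
            intro q hq
            exact if_neg (fun h => hmem q hq h)
          · rw [Finset.sum_eq_single i]
            · rw [if_pos rfl]; exact hsk p i
            · intro q _ hq; exact if_neg (fun h => hq h.symm)
            · intro hni
              exact absurd (by simp [hS, hip] : i ∈ S) hni
        rw [Finset.sum_add_distrib, ← Finset.mul_sum, ← Finset.mul_sum,
          Finset.sum_add_distrib, h1, h2, h3]
        ring
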